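/- arXiv:1905.02837 — 3 statements merged into one kernel-verified Lean document; each statement's English description precedes it below -/
import Mathlib

section
/- With the hypotheses above, if f ∈ L¹(X) with f ≥ 0 a.e., then Ber(f) is a trace-class operator and Tr[Ber(f)] = ∫_X f(x) dx. In particular its trace norm equals ‖f‖_{L¹}. -/
open MeasureTheory ComplexConjugate
open scoped ComplexInnerProductSpace ComplexOrder

/-- If `f ∈ L¹(X)` with `f ≥ 0` a.e., then the Berezin operator `Ber(f)`
is trace class: for every Hilbert basis `(w_k)` the diagonal matrix elements are summable,
`Tr[Ber(f)] = ∑ₖ ⟨w_k, Ber(f) w_k⟩ = ∫_X f`, and (since `Ber(f) ≥ 0`) this trace equals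
the trace norm `‖f‖_{L¹} = ∫_X ‖f‖`. -/
theorem berezin_traceClass
    {H : Type*} [NormedAddCommGroup H] [InnerProductSpace ℂ H]
    [CompleteSpace H] [TopologicalSpace.SeparableSpace H]
    [MeasurableSpace H] [BorelSpace H]
    {X : Type*} [MeasurableSpace X] (μ : Measure X) [SigmaFinite μ]
    (ω : X → H) (hmeas : Measurable ω) (hunit : ∀ x, ‖ω x‖ = 1)
    (hres : ∀ u v : H, ⟪u, v⟫ = ∫ x, ⟪u, ω x⟫ * ⟪ω x, v⟫ ∂μ)
    (f : X → ℂ) (hf : Integrable f μ) (hpos : ∀ᵐ x ∂μ, 0 ≤ f x)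
    (T : H →L[ℂ] H)
    (hT : ∀ u v : H, ⟪v, T u⟫ = ∫ x, f x * ⟪ω x, u⟫ * ⟪v, ω x⟫ ∂μ) :
    ∀ (ι : Type) (w : HilbertBasis ι ℂ H),
      Summable (fun k => ⟪w k, T (w k)⟫)
        ∧ ∑' k, ⟪w k, T (w k)⟫ = ∫ x, f x ∂μ
        ∧ ∑' k, ⟪w k, T (w k)⟫ = ((∫ x, ‖f x‖ ∂μ : ℝ) : ℂ) := by
  intro ι w
  classical
  -- the index type of a Hilbert basis of a separable space is countable
  haveI hcount : Countable ι := by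
    have horth := w.orthonormal
    have hdisj : (Set.univ : Set ι).PairwiseDisjoint
        (fun i => Metric.ball (w i) (1 / 2)) := by
      intro i _ j _ hij
      refine Metric.ball_disjoint_ball ?_
      have h2 : dist (w i) (w j) ^ 2 = 2 := by
        rw [dist_eq_norm, @norm_sub_sq ℂ, horth.1 i, horth.1 j,
          horth.2 hij]
        norm_num
      nlinarith [dist_nonneg (x := w i) (y := w j)]
    have := hdisj.countable_of_isOpen (fun i _ => Metric.isOpen_ball)
      (fun i _ => Metric.nonempty_ball.2 (by norm_num))
    exact Set.countable_univ_iff.mp this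
  set r : X → ℝ := fun x => (f x).re with hrdef
  have hfr : ∀ᵐ x ∂μ, f x = ((r x : ℝ) : ℂ) := by
    filter_upwards [hpos] with x hx
    rcases Complex.le_def.mp hx with ⟨h1, h2⟩
    exact (Complex.ext (by simp [hrdef]) (by simp [hrdef, ← h2])).symm
  have hrpos : ∀ᵐ x ∂μ, 0 ≤ r x := by
    filter_upwards [hpos] with x hx
    exact (Complex.le_def.mp hx).1
  have hrint : Integrable r μ := hf.re
  have hrmeas : AEMeasurable r μ :=
    Complex.measurable_re.comp_aemeasurable hf.aestronglyMeasurable.aemeasurable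
  -- the coefficient functions
  set c : ι → X → ℝ := fun k x => ‖⟪w k, ω x⟫‖ ^ 2 with hcdef
  have hcmeas : ∀ k, Measurable (c k) := fun k =>
    (measurable_const.inner hmeas).norm.pow measurable_const
  have hcnonneg : ∀ k x, 0 ≤ c k x := fun k x => sq_nonneg _
  have hcsum : ∀ x, HasSum (fun k => c k x) 1 := by
    intro x
    have h := w.hasSum_inner_mul_inner (ω x) (ω x)
    have h1 : ⟪ω x, ω x⟫ = ((1 : ℝ) : ℂ) := by
      rw [inner_self_eq_norm_sq_to_K, hunit x]; norm_num
    have h2 : (fun i => ⟪ω x, w i⟫ * ⟪w i, ω x⟫) = fun i => ((c i x : ℝ) : ℂ) := by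
      funext i
      rw [← inner_conj_symm (ω x) (w i), Complex.conj_mul']
      norm_cast
    rw [h1, h2] at h
    exact Complex.hasSum_ofReal.mp h
  -- pointwise identity for the integrand
  have hker : ∀ k, ∀ᵐ x ∂μ,
      f x * ⟪ω x, w k⟫ * ⟪w k, ω x⟫ = ((r x * c k x : ℝ) : ℂ) := by
    intro k
    filter_upwards [hfr] with x hx
    rw [hx, mul_assoc, ← inner_conj_symm (ω x) (w k), Complex.conj_mul']
    simp only [hcdef]
    push_cast
    ring
  -- diagonal matrix elements as real integrals
  have hdiag : ∀ k, ⟪w k, T (w k)⟫ = ((∫ x, r x * c k x ∂μ : ℝ) : ℂ) := by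
    intro k
    rw [hT (w k) (w k), integral_congr_ae (hker k)]
    exact integral_ofReal
  -- lintegral bookkeeping
  set L : ι → ENNReal := fun k => ∫⁻ x, ENNReal.ofReal (r x * c k x) ∂μ with hLdef
  have hLmeas : ∀ k, AEMeasurable (fun x => ENNReal.ofReal (r x * c k x)) μ :=
    fun k => (hrmeas.mul (hcmeas k).aemeasurable).ennreal_ofReal
  have hLsum : ∑' k, L k = ∫⁻ x, ENNReal.ofReal (r x) ∂μ := by
    rw [hLdef, ← lintegral_tsum hLmeas]
    refine lintegral_congr_ae ?_
    filter_upwards [hrpos] with x hx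
    have : (fun k => ENNReal.ofReal (r x * c k x))
        = fun k => ENNReal.ofReal (r x) * ENNReal.ofReal (c k x) := by
      funext k; rw [ENNReal.ofReal_mul hx]
    rw [this, ENNReal.tsum_mul_left, ← ENNReal.ofReal_tsum_of_nonneg
      (fun k => hcnonneg k x) (hcsum x).summable, (hcsum x).tsum_eq,
      ENNReal.ofReal_one, mul_one]
  have hLT : ∫⁻ x, ENNReal.ofReal (r x) ∂μ < ⊤ := by
    refine lt_of_le_of_lt (lintegral_mono fun x => ?_) hrint.2
    exact Real.ofReal_le_enorm (r x)
  have hLne : ∑' k, L k ≠ ⊤ := by rw [hLsum]; exact hLT.ne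
  -- each diagonal integral equals (L k).toReal
  have hint_eq : ∀ k, ∫ x, r x * c k x ∂μ = (L k).toReal := by
    intro k
    rw [hLdef]
    refine integral_eq_lintegral_of_nonneg_ae ?_ ?_
    · filter_upwards [hrpos] with x hx
      exact mul_nonneg hx (hcnonneg k x)
    · exact (hrmeas.mul (hcmeas k).aemeasurable).aestronglyMeasurable
  have hdiag' : ∀ k, ⟪w k, T (w k)⟫ = (((L k).toReal : ℝ) : ℂ) := by
    intro k; rw [hdiag k, hint_eq k]
  have hsummable : Summable fun k => (L k).toReal := ENNReal.summable_toReal hLne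
  have hsumC : Summable (fun k => ⟪w k, T (w k)⟫) := by
    have := (Complex.summable_ofReal).mpr hsummable
    exact this.congr fun k => (hdiag' k).symm
  have hrint_eq : ∫ x, r x ∂μ = (∫⁻ x, ENNReal.ofReal (r x) ∂μ).toReal :=
    integral_eq_lintegral_of_nonneg_ae hrpos hrmeas.aestronglyMeasurable
  have htsum : ∑' k, ⟪w k, T (w k)⟫ = ((∫ x, r x ∂μ : ℝ) : ℂ) := by
    have h1 : ∑' k, ⟪w k, T (w k)⟫ = ∑' k, (((L k).toReal : ℝ) : ℂ) :=
      tsum_congr hdiag'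
    rw [h1, ← Complex.ofReal_tsum]
    congr 1
    rw [← ENNReal.tsum_toReal_eq (fun k => (ENNReal.ne_top_of_tsum_ne_top hLne k)),
      hLsum, hrint_eq]
  refine ⟨hsumC, ?_, ?_⟩
  · rw [htsum]
    rw [show ((∫ x, r x ∂μ : ℝ) : ℂ) = ∫ x, ((r x : ℝ) : ℂ) ∂μ from integral_ofReal.symm]
    exact (integral_congr_ae hfr).symm
  · rw [htsum]
    congr 1
    refine integral_congr_ae ?_
    filter_upwards [hfr, hrpos] with x hx hx'
    rw [hx]
    simp [abs_of_nonneg hx']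
end

section
/- With H, X, ω_x as above (unit vectors with resolution of identity), if T is a trace-class operator on H, then the diagonal covariant symbol Cov(T)(x) = ⟨T ω_x, ω_x⟩ is integrable and ∫_X |Cov(T)(x)| dx ≤ ‖T‖_{trace}. -/
open MeasureTheory ComplexConjugate
open scoped ComplexInnerProductSpace ENNReal

/-- If `T` is trace class, with singular value decomposition
`T = ∑ₖ sₖ ⟨·, φₖ⟩ ψₖ` (sₖ ≥ 0 summable, `(φₖ)`, `(ψₖ)` orthonormal), then the diagonal
covariant symbol `Cov(T)(x) = ⟨T ω_x, ω_x⟩` is integrable with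
`∫ |Cov(T)| ≤ ‖T‖_{B¹} = ∑ₖ sₖ`. -/
theorem covariant_symbol_trace_bound
    {H : Type*} [NormedAddCommGroup H] [InnerProductSpace ℂ H]
    [CompleteSpace H] [TopologicalSpace.SeparableSpace H]
    [MeasurableSpace H] [BorelSpace H]
    {X : Type*} [MeasurableSpace X] (μ : Measure X) [SigmaFinite μ]
    (ω : X → H) (hmeas : Measurable ω) (hunit : ∀ x, ‖ω x‖ = 1)
    (hres : ∀ u : H, ∫ x, ‖⟪ω x, u⟫‖ ^ 2 ∂μ = ‖u‖ ^ 2)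
    (T : H →L[ℂ] H)
    (s : ℕ → ℝ) (hs : ∀ k, 0 ≤ s k) (hsum : Summable s)
    (φ ψ : ℕ → H) (hφ : Orthonormal ℂ φ) (hψ : Orthonormal ℂ ψ)
    (hT : ∀ u : H, T u = ∑' k, ((s k : ℂ) * ⟪φ k, u⟫) • ψ k) :
    Integrable (fun x => ⟪ω x, T (ω x)⟫) μ
      ∧ ∫ x, ‖⟪ω x, T (ω x)⟫‖ ∂μ ≤ ∑' k, s k := by
  have hφ1 : ∀ k, ‖φ k‖ = 1 := hφ.1
  have hψ1 : ∀ k, ‖ψ k‖ = 1 := hψ.1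
  -- summability of the SVD series for unit vectors
  have hsummand : ∀ u : H, ‖u‖ = 1 → Summable (fun k => ((s k : ℂ) * ⟪φ k, u⟫) • ψ k) := by
    intro u hu
    apply Summable.of_norm
    apply Summable.of_nonneg_of_le (fun k => norm_nonneg _) _ hsum
    intro k
    have h : ‖((s k : ℂ) * ⟪φ k, u⟫) • ψ k‖ = |s k| * ‖⟪φ k, u⟫‖ := by
      rw [norm_smul, hψ1 k, mul_one, norm_mul, Complex.norm_real, Real.norm_eq_abs]
    rw [h]
    calc |s k| * ‖⟪φ k, u⟫‖ ≤ |s k| * (‖φ k‖ * ‖u‖) := by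
          gcongr; exact norm_inner_le_norm _ _
      _ = s k := by rw [hφ1 k, hu, abs_of_nonneg (hs k)]; ring
  -- pointwise formula
  have hkey : ∀ x, ⟪ω x, T (ω x)⟫ = ∑' k, (s k : ℂ) * ⟪φ k, ω x⟫ * ⟪ω x, ψ k⟫ := by
    intro x
    rw [hT (ω x), show (⟪ω x, ∑' k, ((s k : ℂ) * ⟪φ k, ω x⟫) • ψ k⟫ : ℂ)
        = innerSL ℂ (ω x) (∑' k, ((s k : ℂ) * ⟪φ k, ω x⟫) • ψ k) from rfl,
      (innerSL ℂ (ω x)).map_tsum (hsummand (ω x) (hunit x))]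
    apply tsum_congr
    intro k
    simp only [innerSL_apply_apply, inner_smul_right]
  -- pointwise dominating series and its summability
  set F : ℕ → X → ℝ := fun k x => s k * (‖⟪φ k, ω x⟫‖ * ‖⟪ω x, ψ k⟫‖) with hF
  have hnorm_term : ∀ (k : ℕ) (x : X),
      ‖(s k : ℂ) * ⟪φ k, ω x⟫ * ⟪ω x, ψ k⟫‖ = F k x := by
    intro k x
    rw [norm_mul, norm_mul, Complex.norm_real, Real.norm_eq_abs, abs_of_nonneg (hs k), mul_assoc]
  have hFle : ∀ k x, F k x ≤ s k := by
    intro k x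
    have h1 : ‖⟪φ k, ω x⟫‖ ≤ 1 := by
      simpa [hφ1 k, hunit x] using norm_inner_le_norm (𝕜 := ℂ) (φ k) (ω x)
    have h2 : ‖⟪ω x, ψ k⟫‖ ≤ 1 := by
      simpa [hψ1 k, hunit x] using norm_inner_le_norm (𝕜 := ℂ) (ω x) (ψ k)
    calc s k * (‖⟪φ k, ω x⟫‖ * ‖⟪ω x, ψ k⟫‖) ≤ s k * (1 * 1) := by
          apply mul_le_mul_of_nonneg_left _ (hs k)
          exact mul_le_mul h1 h2 (norm_nonneg _) zero_le_one
      _ = s k := by ring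
  have hFnn : ∀ k x, 0 ≤ F k x :=
    fun k x => mul_nonneg (hs k) (mul_nonneg (norm_nonneg _) (norm_nonneg _))
  have hFsumm : ∀ x, Summable (fun k => F k x) :=
    fun x => Summable.of_nonneg_of_le (fun k => hFnn k x) (fun k => hFle k x) hsum
  -- pointwise norm bound
  have hnormle : ∀ x, ‖⟪ω x, T (ω x)⟫‖ ≤ ∑' k, F k x := by
    intro x
    rw [hkey x]
    refine (norm_tsum_le_tsum_norm ?_).trans (le_of_eq (tsum_congr fun k => hnorm_term k x))
    exact (hFsumm x).congr fun k => (hnorm_term k x).symm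
  -- measurability
  have hmg : Measurable (fun x => ⟪ω x, T (ω x)⟫) :=
    Measurable.inner hmeas (T.continuous.measurable.comp hmeas)
  have hmF : ∀ k, Measurable (F k) := fun k =>
    (measurable_const.mul ((Measurable.inner measurable_const hmeas).norm.mul
      (Measurable.inner hmeas measurable_const).norm))
  -- L² identity from the resolution of identity
  have hL2 : ∀ u : H, ‖u‖ = 1 → ∫⁻ x, ENNReal.ofReal (‖⟪ω x, u⟫‖ ^ 2) ∂μ = 1 := by
    intro u hu
    have hi : Integrable (fun x => ‖⟪ω x, u⟫‖ ^ 2) μ := by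
      by_contra h
      have := hres u
      rw [integral_undef h, hu] at this
      norm_num at this
    rw [← ofReal_integral_eq_lintegral_ofReal hi (ae_of_all μ fun x => by positivity),
      hres u, hu]
    norm_num
  have hpow : ∀ a : ℝ, 0 ≤ a → (ENNReal.ofReal a) ^ (2:ℝ) = ENNReal.ofReal (a ^ 2) := by
    intro a ha
    rw [show ((2:ℝ)) = ((2:ℕ):ℝ) by norm_num, ENNReal.rpow_natCast,
      ← ENNReal.ofReal_pow ha]
  -- per-term lintegral bound
  have hterm : ∀ k, ∫⁻ x, ENNReal.ofReal (F k x) ∂μ ≤ ENNReal.ofReal (s k) := by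
    intro k
    have hconj : Real.HolderConjugate 2 2 := Real.holderConjugate_iff.mpr ⟨one_lt_two, by norm_num⟩
    have hab : ∫⁻ x, ENNReal.ofReal (‖⟪φ k, ω x⟫‖ * ‖⟪ω x, ψ k⟫‖) ∂μ ≤ 1 := by
      have hH := ENNReal.lintegral_mul_le_Lp_mul_Lq μ hconj
        (f := fun x => ENNReal.ofReal ‖⟪φ k, ω x⟫‖)
        (g := fun x => ENNReal.ofReal ‖⟪ω x, ψ k⟫‖)
        ((Measurable.inner measurable_const hmeas).norm.ennreal_ofReal.aemeasurable)
        ((Measurable.inner hmeas measurable_const).norm.ennreal_ofReal.aemeasurable)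
      have e1 : ∫⁻ x, (ENNReal.ofReal ‖⟪φ k, ω x⟫‖) ^ (2:ℝ) ∂μ = 1 := by
        rw [← hL2 (φ k) (hφ1 k)]
        apply lintegral_congr
        intro x
        rw [hpow _ (norm_nonneg _), norm_inner_symm]
      have e2 : ∫⁻ x, (ENNReal.ofReal ‖⟪ω x, ψ k⟫‖) ^ (2:ℝ) ∂μ = 1 := by
        rw [← hL2 (ψ k) (hψ1 k)]
        apply lintegral_congr
        intro x
        rw [hpow _ (norm_nonneg _)]
      calc ∫⁻ x, ENNReal.ofReal (‖⟪φ k, ω x⟫‖ * ‖⟪ω x, ψ k⟫‖) ∂μ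
          = ∫⁻ x, (ENNReal.ofReal ‖⟪φ k, ω x⟫‖) * (ENNReal.ofReal ‖⟪ω x, ψ k⟫‖) ∂μ := by
            apply lintegral_congr
            intro x
            rw [ENNReal.ofReal_mul (norm_nonneg _)]
        _ ≤ (∫⁻ x, (ENNReal.ofReal ‖⟪φ k, ω x⟫‖) ^ (2:ℝ) ∂μ) ^ (1/(2:ℝ))
            * (∫⁻ x, (ENNReal.ofReal ‖⟪ω x, ψ k⟫‖) ^ (2:ℝ) ∂μ) ^ (1/(2:ℝ)) := hH
        _ = 1 := by rw [e1, e2]; simp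
    calc ∫⁻ x, ENNReal.ofReal (F k x) ∂μ
        = ENNReal.ofReal (s k) * ∫⁻ x, ENNReal.ofReal (‖⟪φ k, ω x⟫‖ * ‖⟪ω x, ψ k⟫‖) ∂μ := by
          rw [← lintegral_const_mul _ (f := fun x => ENNReal.ofReal (‖⟪φ k, ω x⟫‖ * ‖⟪ω x, ψ k⟫‖)) ((Measurable.inner measurable_const hmeas).norm.mul
            (Measurable.inner hmeas measurable_const).norm).ennreal_ofReal]
          apply lintegral_congr
          intro x
          rw [← ENNReal.ofReal_mul (hs k)]
      _ ≤ ENNReal.ofReal (s k) * 1 := by gcongr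
      _ = ENNReal.ofReal (s k) := mul_one _
  -- main lintegral bound
  have hlin : ∫⁻ x, ‖⟪ω x, T (ω x)⟫‖₊ ∂μ ≤ ∑' k, ENNReal.ofReal (s k) := by
    calc ∫⁻ x, (‖⟪ω x, T (ω x)⟫‖₊ : ℝ≥0∞) ∂μ
        ≤ ∫⁻ x, ∑' k, ENNReal.ofReal (F k x) ∂μ := by
          apply lintegral_mono
          intro x
          show (‖⟪ω x, T (ω x)⟫‖₊ : ℝ≥0∞) ≤ ∑' k, ENNReal.ofReal (F k x)
          rw [← enorm_eq_nnnorm, ← ofReal_norm,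
            ← ENNReal.ofReal_tsum_of_nonneg (fun k => hFnn k x) (hFsumm x)]
          exact ENNReal.ofReal_le_ofReal (hnormle x)
      _ = ∑' k, ∫⁻ x, ENNReal.ofReal (F k x) ∂μ :=
          lintegral_tsum fun k => (hmF k).ennreal_ofReal.aemeasurable
      _ ≤ ∑' k, ENNReal.ofReal (s k) := ENNReal.tsum_le_tsum hterm
  have htsum_lt : (∑' k, ENNReal.ofReal (s k)) < ⊤ := by
    rw [← ENNReal.ofReal_tsum_of_nonneg hs hsum]
    exact ENNReal.ofReal_lt_top
  have hint : Integrable (fun x => ⟪ω x, T (ω x)⟫) μ :=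
    ⟨hmg.aestronglyMeasurable, lt_of_le_of_lt hlin htsum_lt⟩
  refine ⟨hint, ?_⟩
  rw [← ENNReal.ofReal_le_ofReal_iff (tsum_nonneg hs),
    ofReal_integral_eq_lintegral_ofReal hint.norm (ae_of_all μ fun x => norm_nonneg _)]
  calc ∫⁻ x, ENNReal.ofReal ‖⟪ω x, T (ω x)⟫‖ ∂μ
      = ∫⁻ x, (‖⟪ω x, T (ω x)⟫‖₊ : ℝ≥0∞) ∂μ := by
        apply lintegral_congr
        intro x
        rw [ofReal_norm, enorm_eq_nnnorm]
    _ ≤ ∑' k, ENNReal.ofReal (s k) := hlin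
    _ = ENNReal.ofReal (∑' k, s k) := (ENNReal.ofReal_tsum_of_nonneg hs hsum).symm
end

section
/- Let G be a connected simply connected nilpotent Lie group with coherent states ω_{z,ζ}(x) = exp(−i⟨log(zx), ζ⟩) ω(zx) built from a fixed unit vector ω ∈ L²(G). For the left translations (L_z u)(x) = u(z⁻¹x) and f ∈ L^∞(G × g*), the Berezin operator satisfies the covariance relation L_z* Ber_ω(f) L_z = Ber_ω(f(·z⁻¹, ·)), where f(·z⁻¹,·)(x,ξ) := f(xz⁻¹, ξ). -/
open MeasureTheory ComplexConjugate
open scoped ComplexInnerProductSpace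

/-!
Moving the left translation `L_z` onto a coherent state, by left invariance of the Haar measure,
gives `⟪ω_{a,ζ}, L_z u⟫ = ⟪ω_{az,ζ}, u⟫`, since `ω_{a,ζ}(zx) = ω_{az,ζ}(x)`. So the weak integral
for `L_z* Ber_ω(f) L_z` is that of `Ber_ω(f)` with `ω_{az,ζ}` in place of `ω_{a,ζ}`, and the
substitution `a ↦ az⁻¹`, which preserves the right invariant Haar measure, turns it into the
integral for `Ber_ω(f(·z⁻¹, ·))`.
-/

namespace MeasureTheory

theorem ae_eq_comp_mul_left_of_forall_ae_eq {G E : Type*} [Semigroup G] [MeasurableSpace G]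
    [MeasurableMul G] {μ : Measure G} [μ.IsMulLeftInvariant] {Ω : G → G → E} {φ : G → E}
    (hΩ : ∀ a, Ω a =ᵐ[μ] fun x => φ (a * x)) (a z : G) :
    Ω (a * z) =ᵐ[μ] fun x => Ω a (z * x) := by
  have hcomp : (Ω a ∘ (z * ·)) =ᵐ[μ] ((φ ∘ (a * ·)) ∘ (z * ·)) :=
    (measurePreserving_mul_left μ z).quasiMeasurePreserving.ae_eq_comp (hΩ a)
  filter_upwards [hcomp, hΩ (a * z)] with x hx hxz
  simp only [Function.comp_apply, mul_assoc] at hx hxz ⊢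
  rw [hxz, hx]

section L2

open scoped InnerProductSpace

variable {G : Type*} [Group G] [MeasurableSpace G] [MeasurableMul G]
  {μ : Measure G} [μ.IsMulLeftInvariant]
  {𝕜 E : Type*} [RCLike 𝕜] [NormedAddCommGroup E] [InnerProductSpace 𝕜 E]

theorem L2.inner_eq_of_ae_eq_mul_left {u u' v w : Lp E 2 μ} (z : G)
    (hu' : u' =ᵐ[μ] fun x => u (z⁻¹ * x)) (hw : w =ᵐ[μ] fun x => v (z * x)) :
    ⟪v, u'⟫_𝕜 = ⟪w, u⟫_𝕜 := by
  have hcomp : (fun x => ⟪v x, u' x⟫_𝕜) ∘ (z * ·) =ᵐ[μ] fun x => ⟪v (z * x), u x⟫_𝕜 := by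
    filter_upwards [(measurePreserving_mul_left μ z).quasiMeasurePreserving.ae_eq_comp hu']
      with x hx
    simp only [Function.comp_apply, inv_mul_cancel_left] at hx ⊢
    rw [hx]
  calc ⟪v, u'⟫_𝕜 = ∫ x, ⟪v (z * x), u' (z * x)⟫_𝕜 ∂μ :=
        (L2.inner_def v u').trans (integral_mul_left_eq_self _ z).symm
    _ = ∫ x, ⟪w x, u x⟫_𝕜 ∂μ := by
        refine integral_congr_ae ?_
        filter_upwards [hcomp, hw] with x hx hwx
        rw [hwx]
        exact hx
    _ = ⟪w, u⟫_𝕜 := (L2.inner_def w u).symm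

end L2

theorem integral_prod_mul_right_eq_self {G D E : Type*} [Group G] [MeasurableSpace G]
    [MeasurableMul G] {μ : Measure G} [μ.IsMulRightInvariant] [SigmaFinite μ]
    [MeasurableSpace D] {ν : Measure D} [SigmaFinite ν]
    [NormedAddCommGroup E] [NormedSpace ℝ E] (F : G × D → E) (z : G) :
    ∫ p, F (p.1 * z, p.2) ∂(μ.prod ν) = ∫ p, F p ∂(μ.prod ν) :=
  ((measurePreserving_mul_right μ z).prod (MeasurePreserving.id ν)).integral_comp
    (MeasurableEquiv.prodCongr (MeasurableEquiv.mulRight z) (.refl D)).measurableEmbedding F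

end MeasureTheory

theorem berezin_left_covariance_general
    {G : Type*} [Group G] [TopologicalSpace G] [IsTopologicalGroup G]
    [MeasurableSpace G] [BorelSpace G]
    (μ : Measure G) [μ.IsHaarMeasure] [μ.IsMulRightInvariant] [SigmaFinite μ]
    {V : Type*} [NormedAddCommGroup V] [NormedSpace ℝ V]
    (e : V ≃ₜ G)
    {D : Type*} [NormedAddCommGroup D] [NormedSpace ℝ D]
    [MeasurableSpace D]
    (ν : Measure D) [SigmaFinite ν]
    (pair : V →ₗ[ℝ] D →ₗ[ℝ] ℝ)
    (ω : Lp ℂ 2 μ)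
    (Ω : G → D → Lp ℂ 2 μ)
    (hΩ : ∀ (z : G) (ζ : D), (Ω z ζ : G → ℂ) =ᵐ[μ]
      fun x => Complex.exp (-(Complex.I * (pair (e.symm (z * x)) ζ : ℂ))) * ω (z * x))
    (L : G → (Lp ℂ 2 μ →L[ℂ] Lp ℂ 2 μ))
    (hL : ∀ (z : G) (u : Lp ℂ 2 μ), (L z u : G → ℂ) =ᵐ[μ] fun x => u (z⁻¹ * x))
    (f : G × D → ℂ)
    (z : G) (T T' : Lp ℂ 2 μ →L[ℂ] Lp ℂ 2 μ)
    (hT : ∀ u v : Lp ℂ 2 μ, ⟪v, T u⟫ =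
      ∫ p : G × D, f p * ⟪Ω p.1 p.2, u⟫ * ⟪v, Ω p.1 p.2⟫ ∂(μ.prod ν))
    (hT' : ∀ u v : Lp ℂ 2 μ, ⟪v, T' u⟫ =
      ∫ p : G × D, f (p.1 * z⁻¹, p.2) * ⟪Ω p.1 p.2, u⟫ * ⟪v, Ω p.1 p.2⟫ ∂(μ.prod ν)) :
    ((ContinuousLinearMap.adjoint (L z)).comp T).comp (L z) = T' := by
  have hshift (a : G) (ζ : D) : (Ω (a * z) ζ : G → ℂ) =ᵐ[μ] fun x => Ω a ζ (z * x) :=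
    ae_eq_comp_mul_left_of_forall_ae_eq (Ω := fun a => (Ω a ζ : G → ℂ))
      (φ := fun y => Complex.exp (-(Complex.I * (pair (e.symm y) ζ : ℂ))) * ω y)
      (fun a => hΩ a ζ) a z
  have hcoh (a : G) (ζ : D) (u : Lp ℂ 2 μ) : ⟪Ω a ζ, L z u⟫ = ⟪Ω (a * z) ζ, u⟫ :=
    L2.inner_eq_of_ae_eq_mul_left z (hL z u) (hshift a ζ)
  have hcoh' (a : G) (ζ : D) (v : Lp ℂ 2 μ) : ⟪L z v, Ω a ζ⟫ = ⟪v, Ω (a * z) ζ⟫ := by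
    rw [← inner_conj_symm, hcoh, inner_conj_symm]
  refine ContinuousLinearMap.ext fun u => ext_inner_left ℂ fun v => ?_
  rw [ContinuousLinearMap.comp_apply, ContinuousLinearMap.comp_apply,
    ContinuousLinearMap.adjoint_inner_right, hT, hT']
  conv_rhs => rw [← integral_prod_mul_right_eq_self _ z]
  simp only [mul_inv_cancel_right, hcoh, hcoh']

/-- Covariance of the Berezin quantization under left translations:
with coherent states `ω_{z,ζ}(x) = e^{-i⟨log(zx), ζ⟩} ω(zx)` built from a unit vector
`ω ∈ L²(G)`, for `f ∈ L^∞(G × 𝔤*)` one has `L_z* Ber_ω(f) L_z = Ber_ω(f(·z⁻¹, ·))`.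
Here `T` is `Ber_ω(f)` and `T'` is `Ber_ω(f(·z⁻¹,·))`, both given weakly, `Ω z ζ` is the
coherent state `ω_{z,ζ}`, and `L` is the left regular representation. -/
theorem berezin_left_covariance
    {G : Type*} [Group G] [TopologicalSpace G] [IsTopologicalGroup G]
    [ConnectedSpace G] [SimplyConnectedSpace G] [Group.IsNilpotent G]
    [MeasurableSpace G] [BorelSpace G]
    (μ : Measure G) [μ.IsHaarMeasure] [μ.IsMulRightInvariant] [SigmaFinite μ]
    {V : Type*} [NormedAddCommGroup V] [NormedSpace ℝ V] [FiniteDimensional ℝ V]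
    (e : V ≃ₜ G)
    {D : Type*} [NormedAddCommGroup D] [NormedSpace ℝ D] [FiniteDimensional ℝ D]
    [MeasurableSpace D] [BorelSpace D]
    (ν : Measure D) [SigmaFinite ν]
    (pair : V →ₗ[ℝ] D →ₗ[ℝ] ℝ)
    (ω : Lp ℂ 2 μ) (hω : ‖ω‖ = 1)
    (Ω : G → D → Lp ℂ 2 μ)
    (hΩ : ∀ (z : G) (ζ : D), (Ω z ζ : G → ℂ) =ᵐ[μ]
      fun x => Complex.exp (-(Complex.I * (pair (e.symm (z * x)) ζ : ℂ))) * ω (z * x))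
    (L : G → (Lp ℂ 2 μ →L[ℂ] Lp ℂ 2 μ))
    (hL : ∀ (z : G) (u : Lp ℂ 2 μ), (L z u : G → ℂ) =ᵐ[μ] fun x => u (z⁻¹ * x))
    (f : G × D → ℂ) (hf : MemLp f ⊤ (μ.prod ν))
    (z : G) (T T' : Lp ℂ 2 μ →L[ℂ] Lp ℂ 2 μ)
    (hT : ∀ u v : Lp ℂ 2 μ, ⟪v, T u⟫ =
      ∫ p : G × D, f p * ⟪Ω p.1 p.2, u⟫ * ⟪v, Ω p.1 p.2⟫ ∂(μ.prod ν))
    (hT' : ∀ u v : Lp ℂ 2 μ, ⟪v, T' u⟫ =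
      ∫ p : G × D, f (p.1 * z⁻¹, p.2) * ⟪Ω p.1 p.2, u⟫ * ⟪v, Ω p.1 p.2⟫ ∂(μ.prod ν)) :
    ((ContinuousLinearMap.adjoint (L z)).comp T).comp (L z) = T' :=
  berezin_left_covariance_general μ e ν pair ω Ω hΩ L hL f z T T' hT hT'
end
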